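/- arXiv:2012.06849 — 3 statements merged into one kernel-verified Lean document; each statement's English description precedes it below -/
import Mathlib

section
/- Let X be a Banach space, ρ ∈ ℂ with ρ ≠ 0, ±1, and f : X → X an even function with f(0) = 0 satisfying ‖E^2 f(x,y,z)‖ ≤ δ(x,y,z) for all x,y,z. Then ‖f(x) − 4f(x/2)‖ ≤ (1/2)·δ(x, 0, −x) for all x ∈ X. -/
open Filter Topology

theorem stmt9 {X : Type*} [NormedAddCommGroup X] [NormedSpace ℂ X] [CompleteSpace X] (ρ : ℂ) (hρ0 : ρ ≠ 0) (hρ1 : ρ ≠ 1) (hρn1 : ρ ≠ -1)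
    (δ : X → X → X → ℝ)
    (f : X → X) (heven : ∀ x : X, f (-x) = f x) (hf0 : f 0 = 0)
    (hf : ∀ x y z : X, ‖(9:ℂ) • f ((3:ℂ)⁻¹ • (x + y + z)) + f x + f y + f z - (4:ℂ) • f ((2:ℂ)⁻¹ • (x + y)) - (4:ℂ) • f ((2:ℂ)⁻¹ • (y + z)) - (4:ℂ) • f ((2:ℂ)⁻¹ • (x + z)) - ρ • ((2:ℂ) • f (x + y + z) + (2:ℂ) • f x - f (x + y) - f (x + z) - f (y + z))‖ ≤ δ x y z) :
    ∀ x : X, ‖f x - (4:ℂ) • f ((2:ℂ)⁻¹ • x)‖ ≤ (1 / 2) * δ x 0 (-x) := by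
  intro x
  have h := hf x 0 (-x)
  have hx : x + 0 + -x = 0 := by abel
  have hneg : f ((2:ℂ)⁻¹ • (0 + -x)) = f ((2:ℂ)⁻¹ • x) := by
    rw [zero_add, smul_neg, heven]
  have hxx : f ((2:ℂ)⁻¹ • (x + -x)) = 0 := by
    simp [hf0]
  rw [hx, hneg, hxx, heven] at h
  simp only [smul_zero, hf0, add_zero, zero_add, sub_zero, add_neg_cancel, heven] at h
  have hE : f x + f x - (4:ℂ) • f ((2:ℂ)⁻¹ • x) - (4:ℂ) • f ((2:ℂ)⁻¹ • x) - ρ • ((2:ℂ) • f x - f x - f x) = (2:ℂ) • (f x - (4:ℂ) • f ((2:ℂ)⁻¹ • x)) := by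
    module
  rw [hE] at h
  rw [norm_smul] at h
  simp only [Complex.norm_ofNat] at h
  linarith
end

section
/- Let X be a Banach space and f : X → X a function with f(0) = 0 satisfying ‖f(x) − 2f(x/2)‖ ≤ ε(x) for all x ∈ X, where ε : X → [0,∞) satisfies ε(x/2) ≤ (k/2)ε(x) for some 0 < k < 1. Then the sequence (2ⁿ f(x/2ⁿ))ₙ is Cauchy for each x, its limit h(x) satisfies h(x) = 2h(x/2), and ‖f(x) − h(x)‖ ≤ ε(x)/(1 − k) for all x ∈ X. -/
open Filter Topology

theorem stmt15 {X : Type*} [NormedAddCommGroup X] [NormedSpace ℝ X] [CompleteSpace X]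
    (k : ℝ) (hk0 : 0 < k) (hk1 : k < 1)
    (ε : X → ℝ) (hεnn : ∀ x : X, 0 ≤ ε x)
    (hε : ∀ x : X, ε ((2:ℝ)⁻¹ • x) ≤ (k / 2) * ε x)
    (f : X → X) (hf0 : f 0 = 0)
    (hf : ∀ x : X, ‖f x - (2:ℝ) • f ((2:ℝ)⁻¹ • x)‖ ≤ ε x) :
    (∀ x : X, CauchySeq (fun n : ℕ => (2:ℝ) ^ n • f (((2:ℝ) ^ n)⁻¹ • x))) ∧
    ∃ h : X → X, (∀ x : X, Tendsto (fun n : ℕ => (2:ℝ) ^ n • f (((2:ℝ) ^ n)⁻¹ • x)) atTop (𝓝 (h x))) ∧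
      (∀ x : X, h x = (2:ℝ) • h ((2:ℝ)⁻¹ • x)) ∧
      (∀ x : X, ‖f x - h x‖ ≤ ε x / (1 - k)) := by
  set g : ℕ → X → X := fun n x => (2:ℝ) ^ n • f (((2:ℝ) ^ n)⁻¹ • x) with hg
  have hεiter : ∀ (n : ℕ) (x : X), ε (((2:ℝ) ^ n)⁻¹ • x) ≤ (k / 2) ^ n * ε x := by
    intro n
    induction n with
    | zero => intro x; simp
    | succ n ih =>
      intro x
      have h1 : (((2:ℝ) ^ (n+1))⁻¹ • x) = (2:ℝ)⁻¹ • (((2:ℝ) ^ n)⁻¹ • x) := by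
        rw [smul_smul, pow_succ, mul_inv, mul_comm]
      rw [h1]
      calc ε ((2:ℝ)⁻¹ • (((2:ℝ) ^ n)⁻¹ • x)) ≤ (k / 2) * ε (((2:ℝ) ^ n)⁻¹ • x) := hε _
        _ ≤ (k / 2) * ((k / 2) ^ n * ε x) := by
            apply mul_le_mul_of_nonneg_left (ih x) (by positivity)
        _ = (k / 2) ^ (n+1) * ε x := by ring
  have hdist : ∀ (x : X) (n : ℕ), dist (g n x) (g (n+1) x) ≤ ε x * k ^ n := by
    intro x n
    have h1 : (((2:ℝ) ^ (n+1))⁻¹ • x) = (2:ℝ)⁻¹ • (((2:ℝ) ^ n)⁻¹ • x) := by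
      rw [smul_smul, pow_succ, mul_inv, mul_comm]
    have h2 : g n x - g (n+1) x =
        (2:ℝ) ^ n • (f (((2:ℝ) ^ n)⁻¹ • x) - (2:ℝ) • f ((2:ℝ)⁻¹ • (((2:ℝ) ^ n)⁻¹ • x))) := by
      rw [hg]
      simp only [smul_sub, smul_smul, h1, pow_succ]
      rw [mul_inv, mul_comm ((2:ℝ)^n)⁻¹ (2:ℝ)⁻¹]
    rw [dist_eq_norm, h2, norm_smul]
    calc ‖(2:ℝ) ^ n‖ * ‖f (((2:ℝ) ^ n)⁻¹ • x) - (2:ℝ) • f ((2:ℝ)⁻¹ • (((2:ℝ) ^ n)⁻¹ • x))‖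
        ≤ (2:ℝ) ^ n * ε (((2:ℝ) ^ n)⁻¹ • x) := by
          rw [Real.norm_eq_abs, abs_of_nonneg (by positivity)]
          exact mul_le_mul_of_nonneg_left (hf _) (by positivity)
      _ ≤ (2:ℝ) ^ n * ((k / 2) ^ n * ε x) := by
          exact mul_le_mul_of_nonneg_left (hεiter n x) (by positivity)
      _ = ε x * k ^ n := by
          rw [div_pow]; field_simp
  have hcauchy : ∀ x : X, CauchySeq (fun n => g n x) := fun x =>
    cauchySeq_of_le_geometric k (ε x) hk1 (hdist x)
  have hlim : ∀ x : X, ∃ a : X, Tendsto (fun n => g n x) atTop (𝓝 a) := fun x =>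
    cauchySeq_tendsto_of_complete (hcauchy x)
  choose h hh using hlim
  refine ⟨hcauchy, h, hh, ?_, ?_⟩
  · intro x
    have key : ∀ n : ℕ, g (n+1) x = (2:ℝ) • g n ((2:ℝ)⁻¹ • x) := by
      intro n
      rw [hg]
      simp only [smul_smul]
      congr 1
      · rw [pow_succ]; ring
      · congr 1
        rw [pow_succ, mul_inv]
    have t1 : Tendsto (fun n => g (n+1) x) atTop (𝓝 (h x)) :=
      (hh x).comp (tendsto_add_atTop_nat 1)
    have t2 : Tendsto (fun n => (2:ℝ) • g n ((2:ℝ)⁻¹ • x)) atTop (𝓝 ((2:ℝ) • h ((2:ℝ)⁻¹ • x))) :=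
      (hh _).const_smul _
    exact tendsto_nhds_unique (t1.congr (fun n => key n)) t2
  · intro x
    have h0 : g 0 x = f x := by rw [hg]; simp
    have := dist_le_of_le_geometric_of_tendsto₀ k (ε x) hk1 (hdist x) (hh x)
    rwa [h0, dist_eq_norm] at this
end

section
/- Let (X, d) be a complete generalized metric space (d may take the value ∞) and F : X → X a strictly contractive mapping with Lipschitz constant 0 < L < 1. Then for each x ∈ X, either d(Fⁿ(x), Fⁿ⁺¹(x)) = ∞ for all n ≥ 0, or there exists n₀ such that d(Fⁿ(x), Fⁿ⁺¹(x)) < ∞ for all n ≥ n₀, the sequence (Fⁿ(x)) converges to a fixed point y* of F which is the unique fixed point of F in Y = {y : d(F^{n₀}(x), y) < ∞}, and d(y, y*) ≤ d(y, F(y))/(1 − L) for all y ∈ Y. -/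
/-!
A generalized metric `d` is an extended metric in Mathlib's sense, so the theorem is the
`EMetricSpace` form of Banach's fixed point theorem. Once one step `d (Fⁿ⁰ x) (Fⁿ⁰⁺¹ x)` is
finite, every later step is finite by contraction, and Banach's theorem applies to the
component `{y : d (Fⁿ⁰ x) y < ∞}` of `Fⁿ⁰ x`. Two fixed points at finite distance coincide,
since `d y y' ≤ L d y y'`.
-/

open Filter Topology Function
open scoped NNReal ENNReal

noncomputable abbrev EMetricSpace.ofEDist {α : Type*} (d : α → α → ℝ≥0∞)
    (hd0 : ∀ a b, d a b = 0 ↔ a = b) (hdsymm : ∀ a b, d a b = d b a)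
    (hdtri : ∀ a b c, d a c ≤ d a b + d b c) :
    EMetricSpace α where
  edist := d
  edist_self a := (hd0 a a).2 rfl
  edist_comm := hdsymm
  edist_triangle := hdtri
  eq_of_edist_eq_zero := (hd0 _ _).1

theorem EMetric.completeSpace_of_forall_cauchy_exists_tendsto {α : Type*} [EMetricSpace α]
    (h : ∀ u : ℕ → α,
      (∀ ε > 0, ∃ N : ℕ, ∀ m n : ℕ, N ≤ m → N ≤ n → edist (u m) (u n) < ε) →
      ∃ l : α, ∀ ε > 0, ∃ N : ℕ, ∀ n : ℕ, N ≤ n → edist (u n) l < ε) :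
    CompleteSpace α := by
  refine EMetric.complete_of_cauchySeq_tendsto fun u hu ↦ ?_
  obtain ⟨l, hl⟩ := h u fun ε hε ↦
    let ⟨N, hN⟩ := EMetric.cauchySeq_iff.1 hu ε hε
    ⟨N, fun m n hm hn ↦ hN m hm n hn⟩
  exact ⟨l, EMetric.tendsto_atTop.2 hl⟩

namespace ContractingWith

variable {α : Type*} [EMetricSpace α] {K : ℝ≥0} {f : α → α}

theorem edist_iterate_succ_lt_top (hf : ContractingWith K f) {x : α} {n₀ : ℕ}
    (h : edist (f^[n₀] x) (f^[n₀ + 1] x) ≠ ∞) :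
    ∀ n, n₀ ≤ n → edist (f^[n] x) (f^[n + 1] x) < ∞ := by
  refine Nat.le_induction h.lt_top fun n _ ih ↦ ?_
  rw [iterate_succ_apply' f n, iterate_succ_apply' f (n + 1)]
  exact (hf.2 _ _).trans_lt (ENNReal.mul_lt_top ENNReal.coe_lt_top ih)

theorem eq_of_isFixedPt_of_edist_lt_top (hf : ContractingWith K f) {x y y' : α}
    (hy : IsFixedPt f y) (hy' : IsFixedPt f y') (hxy : edist x y < ∞) (hxy' : edist x y' < ∞) :
    y' = y :=
  (hf.eq_or_edist_eq_top_of_fixedPoints hy' hy).resolve_right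
    ((edist_triangle_left y' y x).trans_lt (ENNReal.add_lt_top.2 ⟨hxy', hxy⟩)).ne

theorem edist_le_of_isFixedPt_of_edist_lt_top (hf : ContractingWith K f) {x y z : α}
    (hy : IsFixedPt f y) (hxy : edist x y < ∞) (hxz : edist x z < ∞) :
    edist z y ≤ edist z (f z) / (1 - K) :=
  hf.edist_le_of_fixedPoint
    ((edist_triangle_left z y x).trans_lt (ENNReal.add_lt_top.2 ⟨hxz, hxy⟩)).ne hy

theorem edist_iterate_succ_eq_top_or_exists_isFixedPt [CompleteSpace α]
    (hf : ContractingWith K f) (x : α) :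
    (∀ n : ℕ, edist (f^[n] x) (f^[n + 1] x) = ∞) ∨
      ∃ n₀ : ℕ, (∀ n, n₀ ≤ n → edist (f^[n] x) (f^[n + 1] x) < ∞) ∧
        ∃ y, IsFixedPt f y ∧ Tendsto (fun n ↦ f^[n] x) atTop (𝓝 y) ∧
          (∀ y', IsFixedPt f y' → edist (f^[n₀] x) y' < ∞ → y' = y) ∧
          ∀ z, edist (f^[n₀] x) z < ∞ → edist z y ≤ edist z (f z) / (1 - K) := by
  refine or_iff_not_imp_left.2 fun hall ↦ ?_
  obtain ⟨n₀, hn₀⟩ := not_forall.1 hall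
  have hstep : edist (f^[n₀] x) (f (f^[n₀] x)) ≠ ∞ := by rwa [← iterate_succ_apply' f n₀]
  set y := efixedPoint f hf _ hstep
  have hy : IsFixedPt f y := hf.efixedPoint_isFixedPt hstep
  have hxy : edist (f^[n₀] x) y < ∞ := hf.edist_efixedPoint_lt_top hstep
  have hconv : Tendsto (fun n ↦ f^[n] x) atTop (𝓝 y) := by
    refine (tendsto_add_atTop_iff_nat n₀).1 ?_
    simpa only [iterate_add_apply] using hf.tendsto_iterate_efixedPoint hstep
  exact ⟨n₀, hf.edist_iterate_succ_lt_top hn₀, y, hy, hconv,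
    fun y' hy' hxy' ↦ hf.eq_of_isFixedPt_of_edist_lt_top hy hy' hxy hxy',
    fun z hxz ↦ hf.edist_le_of_isFixedPt_of_edist_lt_top hy hxy hxz⟩

end ContractingWith

theorem ENNReal.ofReal_one_div_one_sub {L : ℝ} (hL0 : 0 ≤ L) (hL1 : L < 1) :
    ENNReal.ofReal (1 / (1 - L)) = (1 - ENNReal.ofReal L)⁻¹ := by
  rw [one_div, ENNReal.ofReal_inv_of_pos (by linarith), ENNReal.ofReal_sub _ hL0,
    ENNReal.ofReal_one]

theorem stmt18 {Y : Type*} (d : Y → Y → ENNReal)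
    (hd0 : ∀ a b : Y, d a b = 0 ↔ a = b)
    (hdsymm : ∀ a b : Y, d a b = d b a)
    (hdtri : ∀ a b c : Y, d a c ≤ d a b + d b c)
    (hcomplete : ∀ u : ℕ → Y,
      (∀ ε : ENNReal, 0 < ε → ∃ N : ℕ, ∀ m n : ℕ, N ≤ m → N ≤ n → d (u m) (u n) < ε) →
      ∃ l : Y, ∀ ε : ENNReal, 0 < ε → ∃ N : ℕ, ∀ n : ℕ, N ≤ n → d (u n) l < ε)
    (F : Y → Y) (L : ℝ) (hL0 : 0 < L) (hL1 : L < 1)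
    (hF : ∀ a b : Y, d (F a) (F b) ≤ ENNReal.ofReal L * d a b) :
    ∀ x : Y, (∀ n : ℕ, d (F^[n] x) (F^[n+1] x) = ⊤) ∨
      ∃ n₀ : ℕ, (∀ n : ℕ, n₀ ≤ n → d (F^[n] x) (F^[n+1] x) < ⊤) ∧
        ∃ y : Y, F y = y ∧
          (∀ ε : ENNReal, 0 < ε → ∃ N : ℕ, ∀ n : ℕ, N ≤ n → d (F^[n] x) y < ε) ∧
          (∀ y' : Y, F y' = y' → d (F^[n₀] x) y' < ⊤ → y' = y) ∧
          (∀ z : Y, d (F^[n₀] x) z < ⊤ → d z y ≤ ENNReal.ofReal (1 / (1 - L)) * d z (F z)) := by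
  intro x
  let := EMetricSpace.ofEDist d hd0 hdsymm hdtri
  have : CompleteSpace Y := EMetric.completeSpace_of_forall_cauchy_exists_tendsto hcomplete
  have hcontr : ContractingWith (Real.toNNReal L) F := ⟨Real.toNNReal_lt_one.2 hL1, hF⟩
  refine (hcontr.edist_iterate_succ_eq_top_or_exists_isFixedPt x).imp_right
    fun ⟨n₀, hfin, y, hy, hconv, huniq, hbound⟩ ↦
      ⟨n₀, hfin, y, hy, EMetric.tendsto_atTop.1 hconv, huniq, fun z hz ↦ ?_⟩
  rw [ENNReal.ofReal_one_div_one_sub hL0.le hL1, ← ENNReal.div_eq_inv_mul]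
  exact hbound z hz
end
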